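/- Let V ⊆ ℤ² be a finite set with |V| = 3k, let G be the grid graph on V (two vertices are adjacent if and only if their Euclidean distance is 1), and let T : ℤ² → ℝ² be the map T(x,y) = (x − y, x + y). Then the vertices of G can be partitioned into k vertex-disjoint paths on three vertices each (a P₃-partition) if and only if there exists a set Φ of 2k axis-parallel closed unit squares in ℝ² that is a discriminating code for the point set T(V) = {T(v) : v ∈ V}. -/

import Mathlib

/-- A point `p` belongs to the axis-parallel closed unit square centered at `c`
(the closed ball of radius `1/2` in the sup metric of `ℝ × ℝ`). -/
def inSq (p c : ℝ × ℝ) : Prop := dist p c ≤ 1 / 2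

/-- The code of a point `p` with respect to a finite set `Φ` of axis-parallel
closed unit squares, given by their centers. -/
def sqCode (Φ : Finset (ℝ × ℝ)) (p : ℝ × ℝ) : Set (ℝ × ℝ) :=
  {c | c ∈ Φ ∧ inSq p c}

/-- The map `T(x, y) = (x - y, x + y)` (rotation by `π/4` and scaling by `√2`). -/
def Tmap (u : ℤ × ℤ) : ℝ × ℝ := ((u.1 : ℝ) - (u.2 : ℝ), (u.1 : ℝ) + (u.2 : ℝ))

/-- Euclidean distance between two points of `ℤ²`. -/
noncomputable def eucDist (u v : ℤ × ℤ) : ℝ :=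
  Real.sqrt (((u.1 - v.1 : ℤ) : ℝ) ^ 2 + ((u.2 - v.2 : ℤ) : ℝ) ^ 2)

/-- Adjacency in the grid graph: Euclidean distance exactly `1`. -/
noncomputable def gridAdj (a b : ℤ × ℤ) : Prop := eucDist a b = 1

/-!
Under `T` the grid becomes the lattice of integer points with coordinates of equal parity, so two
grid points lie in a common unit square only if they are equal or adjacent. As the grid graph is
bipartite, a square therefore contains at most two points of `T(V)`, and for adjacent `a, b` the
square centred at the midpoint of `T a` and `T b` contains exactly `T a` and `T b`.

A `P₃`-partition with paths `a - b - c` yields the code made of the squares around `{a, b}` and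
`{b, c}`. Conversely, the points lying in only one square have distinct singleton codes, so there
are at most `|Φ| = 2k` of them, while double counting incidences gives
`2|V| - #{points in one square} ≤ ∑ |code| = ∑ |points in a square| ≤ 2|Φ|`. Since `2|V| = 3|Φ|`
all these inequalities are equalities: every square holds one point lying in no other square and
one point lying in exactly two squares, and each point of the second kind forms a `P₃` with the
two points of the first kind that share its squares.
-/

open Finset

lemma Int.sq_add_sq_eq_one_iff {m n : ℤ} :
    m ^ 2 + n ^ 2 = 1 ↔ (m = 0 ∧ (n = 1 ∨ n = -1)) ∨ (n = 0 ∧ (m = 1 ∨ m = -1)) := by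
  constructor
  · intro h
    obtain ⟨hm₁, hm₂⟩ := abs_le.1 ((sq_le_one_iff_abs_le_one m).1 (by nlinarith [sq_nonneg n]))
    obtain ⟨hn₁, hn₂⟩ := abs_le.1 ((sq_le_one_iff_abs_le_one n).1 (by nlinarith [sq_nonneg m]))
    interval_cases m <;> interval_cases n <;> simp_all
  · rintro (⟨rfl, rfl | rfl⟩ | ⟨rfl, rfl | rfl⟩) <;> norm_num

lemma gridAdj_iff {a b : ℤ × ℤ} : gridAdj a b ↔
    (a.1 = b.1 ∧ (a.2 - b.2 = 1 ∨ a.2 - b.2 = -1)) ∨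
      (a.2 = b.2 ∧ (a.1 - b.1 = 1 ∨ a.1 - b.1 = -1)) := by
  have h : gridAdj a b ↔ (a.1 - b.1) ^ 2 + (a.2 - b.2) ^ 2 = 1 := by
    rw [gridAdj, eucDist, Real.sqrt_eq_one]
    exact_mod_cast Iff.rfl
  rw [h, Int.sq_add_sq_eq_one_iff]
  omega

def gridGraph : SimpleGraph (ℤ × ℤ) where
  Adj := gridAdj
  symm := ⟨fun _ _ h => by rw [gridAdj_iff] at h ⊢; omega⟩
  loopless := ⟨fun _ h => by rw [gridAdj_iff] at h; omega⟩

lemma gridGraph_adj {a b : ℤ × ℤ} : gridGraph.Adj a b ↔ gridAdj a b := Iff.rfl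

lemma gridGraph_colorable_two : gridGraph.Colorable 2 :=
  ⟨SimpleGraph.Coloring.mk (fun v => ⟨((v.1 + v.2) % 2).toNat, by omega⟩) fun {a b} h => by
    rw [gridGraph_adj, gridAdj_iff] at h
    simp only [ne_eq, Fin.mk.injEq]
    omega⟩

lemma Tmap_injective : Function.Injective Tmap := by
  rintro ⟨u₁, u₂⟩ ⟨v₁, v₂⟩ h
  simp only [Tmap, Prod.mk.injEq] at h
  have h₁ : (u₁ : ℝ) = v₁ := by linarith
  have h₂ : (u₂ : ℝ) = v₂ := by linarith
  rw [Prod.mk.injEq]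
  exact ⟨mod_cast h₁, mod_cast h₂⟩

lemma dist_Tmap_le_one_iff {u v : ℤ × ℤ} :
    dist (Tmap u) (Tmap v) ≤ 1 ↔ u = v ∨ gridAdj u v := by
  have h : dist (Tmap u) (Tmap v) ≤ 1 ↔
      |(u.1 - u.2) - (v.1 - v.2)| ≤ 1 ∧ |(u.1 + u.2) - (v.1 + v.2)| ≤ 1 := by
    simp only [Prod.dist_eq, Real.dist_eq, Tmap, max_le_iff]
    exact_mod_cast Iff.rfl
  rw [h, abs_le, abs_le, gridAdj_iff, Prod.ext_iff]
  omega

lemma gridAdj_of_inSq {u v : ℤ × ℤ} {c : ℝ × ℝ} (hu : inSq (Tmap u) c) (hv : inSq (Tmap v) c)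
    (huv : u ≠ v) : gridAdj u v := by
  refine (dist_Tmap_le_one_iff.1 ?_).resolve_left huv
  unfold inSq at hu hv
  linarith [dist_triangle_right (Tmap u) (Tmap v) c]

lemma inSq_midpoint_iff {a b : ℤ × ℤ} (hab : gridAdj a b) (v : ℤ × ℤ) :
    inSq (Tmap v) (midpoint ℝ (Tmap a) (Tmap b)) ↔ v = a ∨ v = b := by
  have hdist : dist (Tmap a) (Tmap b) ≤ 1 := dist_Tmap_le_one_iff.2 (Or.inr hab)
  have ha : inSq (Tmap a) (midpoint ℝ (Tmap a) (Tmap b)) := by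
    rw [inSq, dist_left_midpoint]; norm_num; linarith
  have hb : inSq (Tmap b) (midpoint ℝ (Tmap a) (Tmap b)) := by
    rw [inSq, dist_right_midpoint]; norm_num; linarith
  refine ⟨fun hv => ?_, by rintro (rfl | rfl) <;> assumption⟩
  by_contra! hne
  exact gridGraph_colorable_two.cliqueFree (by norm_num) _
    (gridGraph.is3Clique_triple_iff.2
      ⟨gridAdj_of_inSq hv ha hne.1, gridAdj_of_inSq hv hb hne.2, hab⟩)

section DiscriminatingCode

variable {α β : Type*} {r : α → β → Prop}

lemma pairwiseDisjoint_of_meet_of_confined {P : Finset (Finset α)}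
    (hP : (P : Set (Finset α)).PairwiseDisjoint id) {S : Finset α → Finset β}
    (hmeet : ∀ t ∈ P, ∀ x ∈ S t, ∃ v ∈ t, r v x)
    (hconf : ∀ t ∈ P, ∀ x ∈ S t, ∀ v, r v x → v ∈ t) :
    (P : Set (Finset α)).PairwiseDisjoint S := by
  intro t ht t' ht' hne
  refine disjoint_left.2 fun x hx hx' => ?_
  obtain ⟨v, hv, hvx⟩ := hmeet t ht x hx
  exact disjoint_left.1 (hP ht ht' hne) hv (hconf t' ht' x hx' v hvx)

variable [∀ a b, Decidable (r a b)] {V : Finset α} {Φ : Finset β} {k : ℕ}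

variable (r V Φ) in
/-- `r v c` says that the point `v` lies in the square `c`, so `Φ.bipartiteAbove r v` is the code
of `v`. -/
def IsDiscriminatingCode : Prop :=
  (∀ v ∈ V, ∃ c ∈ Φ, r v c) ∧ Set.InjOn (fun v => Φ.bipartiteAbove r v) (V : Set α)

section Counting

variable [DecidableEq β]

variable (r V Φ) in
lemma image_bipartiteAbove_subset_powersetCard_one :
    {v ∈ V | #(Φ.bipartiteAbove r v) = 1}.image (Φ.bipartiteAbove r ·) ⊆ Φ.powersetCard 1 := by
  intro s hs
  obtain ⟨v, hv, rfl⟩ := mem_image.1 hs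
  exact mem_powersetCard.2 ⟨filter_subset _ _, (mem_filter.1 hv).2⟩

lemma IsDiscriminatingCode.card_image_filter_card_eq_one (hΦ : IsDiscriminatingCode r V Φ) :
    #({v ∈ V | #(Φ.bipartiteAbove r v) = 1}.image (Φ.bipartiteAbove r ·)) =
      #{v ∈ V | #(Φ.bipartiteAbove r v) = 1} :=
  card_image_of_injOn (hΦ.2.mono fun _ hv => (mem_filter.1 hv).1)

theorem IsDiscriminatingCode.tight_counts (hΦ : IsDiscriminatingCode r V Φ)
    (hle : ∀ c ∈ Φ, #(V.bipartiteBelow r c) ≤ 2) (hV : #V = 3 * k) (hΦk : #Φ = 2 * k) :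
    #{v ∈ V | #(Φ.bipartiteAbove r v) = 1} = #Φ ∧ ∑ v ∈ V, #(Φ.bipartiteAbove r v) = 2 * #Φ ∧
      ∀ v ∈ V, #(Φ.bipartiteAbove r v) = 1 ∨ #(Φ.bipartiteAbove r v) = 2 := by
  set L := {v ∈ V | #(Φ.bipartiteAbove r v) = 1}
  set w : α → ℕ := fun v => #(Φ.bipartiteAbove r v) + if #(Φ.bipartiteAbove r v) = 1 then 1 else 0
  have hL : #L ≤ #Φ := by
    simpa only [hΦ.card_image_filter_card_eq_one, card_powersetCard, Nat.choose_one_right] using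
      card_le_card (image_bipartiteAbove_subset_powersetCard_one r V Φ)
  have hw : ∀ v ∈ V, 2 ≤ w v := by
    intro v hv
    obtain ⟨c, hc, hvc⟩ := hΦ.1 v hv
    have : 0 < #(Φ.bipartiteAbove r v) := card_pos.2 ⟨c, (mem_bipartiteAbove r).2 ⟨hc, hvc⟩⟩
    simp only [w]
    split_ifs <;> omega
  have hsum_w : ∑ v ∈ V, w v = ∑ v ∈ V, #(Φ.bipartiteAbove r v) + #L := by
    simp only [w, sum_add_distrib, L, card_filter]
  have hsum_le : ∑ v ∈ V, #(Φ.bipartiteAbove r v) ≤ ∑ c ∈ Φ, 2 := by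
    rw [sum_card_bipartiteAbove_eq_sum_card_bipartiteBelow]
    exact sum_le_sum hle
  have hsum_ge : ∑ v ∈ V, 2 ≤ ∑ v ∈ V, w v := sum_le_sum hw
  simp only [sum_const, smul_eq_mul] at hsum_le hsum_ge
  refine ⟨by omega, by omega, fun v hv => ?_⟩
  have := (sum_eq_sum_iff_of_le hw).1 (by rw [sum_const, smul_eq_mul]; omega) v hv
  simp only [w] at this
  split_ifs at this <;> omega

theorem IsDiscriminatingCode.tight_of_card_eq (hΦ : IsDiscriminatingCode r V Φ)
    (hle : ∀ c ∈ Φ, #(V.bipartiteBelow r c) ≤ 2) (hV : #V = 3 * k) (hΦk : #Φ = 2 * k) :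
    (∀ c ∈ Φ, ∃ a ∈ V, Φ.bipartiteAbove r a = {c}) ∧
      (∀ c ∈ Φ, #(V.bipartiteBelow r c) = 2) ∧
      (∀ v ∈ V, #(Φ.bipartiteAbove r v) = 1 ∨ #(Φ.bipartiteAbove r v) = 2) ∧
      #{v ∈ V | #(Φ.bipartiteAbove r v) = 2} = k := by
  obtain ⟨hL, hsum, hone_or_two⟩ := hΦ.tight_counts hle hV hΦk
  refine ⟨fun c hc => ?_, ?_, hone_or_two, ?_⟩
  · have himg := eq_of_subset_of_card_le (image_bipartiteAbove_subset_powersetCard_one r V Φ)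
      (by rw [card_powersetCard, Nat.choose_one_right, hΦ.card_image_filter_card_eq_one, hL])
    obtain ⟨a, ha, hac⟩ :=
      mem_image.1 (himg ▸ mem_powersetCard.2 ⟨singleton_subset_iff.2 hc, card_singleton c⟩)
    exact ⟨a, (mem_filter.1 ha).1, hac⟩
  · refine (sum_eq_sum_iff_of_le hle).1 ?_
    rw [← sum_card_bipartiteAbove_eq_sum_card_bipartiteBelow, hsum, sum_const, smul_eq_mul,
      mul_comm]
  · have hsplit : #{v ∈ V | #(Φ.bipartiteAbove r v) = 1} +
        #{v ∈ V | ¬#(Φ.bipartiteAbove r v) = 1} = #V :=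
      card_filter_add_card_filter_not _
    have hfilter : {v ∈ V | ¬#(Φ.bipartiteAbove r v) = 1} =
        {v ∈ V | #(Φ.bipartiteAbove r v) = 2} :=
      filter_congr fun v hv => by have := hone_or_two v hv; omega
    rw [hfilter] at hsplit
    omega

end Counting

variable [DecidableEq α]

def IsP3Partition (G : SimpleGraph α) (V : Finset α) (k : ℕ) (Pt : Finset (Finset α)) : Prop :=
  #Pt = k ∧ (∀ t ∈ Pt, t ⊆ V) ∧ (Pt : Set (Finset α)).PairwiseDisjoint id ∧ V = Pt.biUnion id ∧
    ∀ t ∈ Pt, ∃ a b c, a ≠ c ∧ G.Adj a b ∧ G.Adj b c ∧ t = {a, b, c}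

variable (r V Φ) in
def coveredWith (b : α) : Finset α :=
  (Φ.bipartiteAbove r b).biUnion fun c => V.bipartiteBelow r c

lemma mem_coveredWith {b x : α} :
    x ∈ coveredWith r V Φ b ↔ ∃ c ∈ Φ, r b c ∧ x ∈ V ∧ r x c := by
  simp [coveredWith, and_assoc]

lemma coveredWith_subset {b : α} : coveredWith r V Φ b ⊆ V :=
  biUnion_subset.2 fun _ _ => filter_subset _ V

lemma IsDiscriminatingCode.mem_coveredWith_self (hΦ : IsDiscriminatingCode r V Φ) {b : α}
    (hb : b ∈ V) : b ∈ coveredWith r V Φ b := by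
  obtain ⟨c, hc, hbc⟩ := hΦ.1 b hb
  exact mem_coveredWith.2 ⟨c, hc, hbc, hb, hbc⟩

variable [DecidableEq β]

lemma isDiscriminatingCode_biUnion {P : Finset (Finset α)}
    (hP : (P : Set (Finset α)).PairwiseDisjoint id) {S : Finset α → Finset β}
    (hS : ∀ t ∈ P, IsDiscriminatingCode r t (S t))
    (hconf : ∀ t ∈ P, ∀ x ∈ S t, ∀ v, r v x → v ∈ t) :
    IsDiscriminatingCode r (P.biUnion id) (P.biUnion S) := by
  have hrestrict : ∀ t ∈ P, ∀ v ∈ t,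
      (P.biUnion S).bipartiteAbove r v = (S t).bipartiteAbove r v := by
    intro t ht v hv
    ext x
    simp only [mem_bipartiteAbove, mem_biUnion]
    refine ⟨fun ⟨⟨t', ht', hx⟩, hvx⟩ => ⟨?_, hvx⟩, fun ⟨hx, hvx⟩ => ⟨⟨t, ht, hx⟩, hvx⟩⟩
    obtain rfl : t' = t := by
      by_contra hne
      exact disjoint_left.1 (hP ht' ht hne) (hconf t' ht' x hx v hvx) hv
    exact hx
  refine ⟨fun v hv => ?_, fun u hu v hv huv => ?_⟩
  · obtain ⟨t, ht, hvt⟩ := mem_biUnion.1 hv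
    obtain ⟨x, hx, hvx⟩ := (hS t ht).1 v hvt
    exact ⟨x, mem_biUnion.2 ⟨t, ht, hx⟩, hvx⟩
  · dsimp only at huv ⊢
    obtain ⟨t, ht, hut⟩ := mem_biUnion.1 (mem_coe.1 hu)
    obtain ⟨x, hx, hux⟩ := (hS t ht).1 u hut
    have hvx : r v x := by
      have : x ∈ (P.biUnion S).bipartiteAbove r u :=
        (mem_bipartiteAbove r).2 ⟨mem_biUnion.2 ⟨t, ht, hx⟩, hux⟩
      exact ((mem_bipartiteAbove r).1 (huv ▸ this)).2
    have hvt : v ∈ t := hconf t ht x hx v hvx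
    refine (hS t ht).2 hut hvt ?_
    simpa only [← hrestrict t ht u hut, ← hrestrict t ht v hvt] using huv

lemma exists_isDiscriminatingCode_of_path {G : SimpleGraph α} {m : α → α → β}
    (hm : ∀ a b, G.Adj a b → ∀ v, r v (m a b) ↔ v = a ∨ v = b)
    {a b c : α} (hac : a ≠ c) (hab : G.Adj a b) (hbc : G.Adj b c) :
    ∃ S : Finset β, #S = 2 ∧ IsDiscriminatingCode r {a, b, c} S ∧
      (∀ x ∈ S, ∃ v ∈ ({a, b, c} : Finset α), r v x) ∧
      ∀ x ∈ S, ∀ v, r v x → v ∈ ({a, b, c} : Finset α) := by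
  have hmab := hm a b hab
  have hmbc := hm b c hbc
  have hne : m a b ≠ m b c := fun h => by
    have := (hmbc a).1 (h ▸ (hmab a).2 (Or.inl rfl))
    exact this.elim hab.ne hac
  refine ⟨{m a b, m b c}, card_pair hne, ⟨?_, ?_⟩, ?_, ?_⟩
  · intro v hv
    simp only [mem_insert, mem_singleton] at hv
    simp only [mem_insert, mem_singleton, exists_eq_or_imp, exists_eq_left, hmab, hmbc]
    tauto
  · intro u hu v hv huv
    have h₁ := congrArg (m a b ∈ ·) huv
    have h₂ := congrArg (m b c ∈ ·) huv
    simp only [mem_bipartiteAbove, mem_insert, mem_singleton, true_or, or_true, true_and,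
      hmab, hmbc, eq_iff_iff] at h₁ h₂
    simp only [coe_insert, coe_singleton, Set.mem_insert_iff, Set.mem_singleton_iff] at hu hv
    have := hab.ne
    have := hbc.ne
    rcases hu with rfl | rfl | rfl <;> rcases hv with rfl | rfl | rfl <;> tauto
  · simp only [mem_insert, mem_singleton, forall_eq_or_imp, forall_eq]
    exact ⟨⟨a, by simp, (hmab a).2 (Or.inl rfl)⟩, ⟨b, by simp, (hmbc b).2 (Or.inl rfl)⟩⟩
  · simp only [mem_insert, mem_singleton, forall_eq_or_imp, forall_eq, hmab, hmbc]
    tauto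

theorem IsP3Partition.exists_isDiscriminatingCode {G : SimpleGraph α}
    {Pt : Finset (Finset α)} (hPt : IsP3Partition G V k Pt) {m : α → α → β}
    (hm : ∀ a b, G.Adj a b → ∀ v, r v (m a b) ↔ v = a ∨ v = b) :
    ∃ Φ : Finset β, #Φ = 2 * k ∧ IsDiscriminatingCode r V Φ := by
  obtain ⟨hcard, -, hdisj, rfl, hpath⟩ := hPt
  have hcode : ∀ t ∈ Pt, ∃ S : Finset β, #S = 2 ∧ IsDiscriminatingCode r t S ∧
      (∀ x ∈ S, ∃ v ∈ t, r v x) ∧ ∀ x ∈ S, ∀ v, r v x → v ∈ t := by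
    intro t ht
    obtain ⟨a, b, c, hac, hab, hbc, rfl⟩ := hpath t ht
    exact exists_isDiscriminatingCode_of_path hm hac hab hbc
  choose! S hS₂ hS hmeet hconf using hcode
  refine ⟨Pt.biUnion S, ?_, isDiscriminatingCode_biUnion hdisj hS hconf⟩
  rw [card_biUnion (pairwiseDisjoint_of_meet_of_confined hdisj hmeet hconf),
    sum_congr rfl hS₂, sum_const, smul_eq_mul, hcard, mul_comm]

theorem IsDiscriminatingCode.exists_bipartiteBelow_eq_pair (hΦ : IsDiscriminatingCode r V Φ)
    (hle : ∀ c ∈ Φ, #(V.bipartiteBelow r c) ≤ 2) (hV : #V = 3 * k) (hΦk : #Φ = 2 * k)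
    {c : β} (hc : c ∈ Φ) :
    ∃ a b, V.bipartiteBelow r c = {a, b} ∧ Φ.bipartiteAbove r a = {c} ∧
      #(Φ.bipartiteAbove r b) = 2 := by
  obtain ⟨hleaf, hbelow, hone_or_two, -⟩ := hΦ.tight_of_card_eq hle hV hΦk
  obtain ⟨a, ha, hac⟩ := hleaf c hc
  have haS : a ∈ V.bipartiteBelow r c :=
    (mem_bipartiteBelow r).2 ⟨ha, ((mem_bipartiteAbove r).1 (hac ▸ mem_singleton_self c)).2⟩
  obtain ⟨b, hb, hba⟩ := exists_mem_ne (by rw [hbelow c hc]; norm_num) a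
  have hpair : V.bipartiteBelow r c = {a, b} :=
    (eq_of_subset_of_card_le (insert_subset haS (singleton_subset_iff.2 hb))
      (by rw [hbelow c hc, card_pair hba.symm])).symm
  refine ⟨a, b, hpair, hac, (hone_or_two b ((mem_bipartiteBelow r).1 hb).1).resolve_left ?_⟩
  intro hb₁
  obtain ⟨x, hx⟩ := card_eq_one.1 hb₁
  have hcb : c ∈ Φ.bipartiteAbove r b :=
    (mem_bipartiteAbove r).2 ⟨hc, ((mem_bipartiteBelow r).1 hb).2⟩
  rw [hx, mem_singleton] at hcb
  exact hba (hΦ.2 ((mem_bipartiteBelow r).1 hb).1 ha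
    (show Φ.bipartiteAbove r b = Φ.bipartiteAbove r a by rw [hx, hac, hcb]))

theorem IsDiscriminatingCode.eq_of_mem_bipartiteBelow (hΦ : IsDiscriminatingCode r V Φ)
    (hle : ∀ c ∈ Φ, #(V.bipartiteBelow r c) ≤ 2) (hV : #V = 3 * k) (hΦk : #Φ = 2 * k)
    {c : β} (hc : c ∈ Φ) {b b' : α} (hb : b ∈ V.bipartiteBelow r c)
    (hb' : b' ∈ V.bipartiteBelow r c) (hb₂ : #(Φ.bipartiteAbove r b) = 2)
    (hb₂' : #(Φ.bipartiteAbove r b') = 2) : b = b' := by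
  obtain ⟨a, h, hpair, ha, -⟩ := hΦ.exists_bipartiteBelow_eq_pair hle hV hΦk hc
  have hne : ∀ x, #(Φ.bipartiteAbove r x) = 2 → x ≠ a := by
    rintro x hx rfl
    simp [ha] at hx
  simp only [hpair, mem_insert, mem_singleton] at hb hb'
  rw [hb.resolve_left (hne b hb₂), hb'.resolve_left (hne b' hb₂')]

theorem IsDiscriminatingCode.coveredWith_eq_path {G : SimpleGraph α}
    (hΦ : IsDiscriminatingCode r V Φ)
    (hle : ∀ c ∈ Φ, #(V.bipartiteBelow r c) ≤ 2) (hV : #V = 3 * k) (hΦk : #Φ = 2 * k)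
    (hadj : ∀ a b c, a ≠ b → r a c → r b c → G.Adj a b) {b : α} (hb : b ∈ V)
    (hb₂ : #(Φ.bipartiteAbove r b) = 2) :
    ∃ a a', a ≠ a' ∧ G.Adj a b ∧ G.Adj b a' ∧ coveredWith r V Φ b = {a, b, a'} := by
  obtain ⟨S, S', hSS', hbS⟩ := card_eq_two.1 hb₂
  have hS : S ∈ Φ ∧ r b S := (mem_bipartiteAbove r).1 (hbS ▸ mem_insert_self S {S'})
  have hS' : S' ∈ Φ ∧ r b S' :=
    (mem_bipartiteAbove r).1 (hbS ▸ mem_insert_of_mem (mem_singleton_self S'))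
  have hleaf : ∀ {c}, c ∈ Φ → r b c →
      ∃ a, V.bipartiteBelow r c = {a, b} ∧ Φ.bipartiteAbove r a = {c} ∧ G.Adj a b := by
    intro c hc hbc
    obtain ⟨a, h, hpair, ha, hh⟩ := hΦ.exists_bipartiteBelow_eq_pair hle hV hΦk hc
    have hbmem : b ∈ V.bipartiteBelow r c := (mem_bipartiteBelow r).2 ⟨hb, hbc⟩
    obtain rfl := hΦ.eq_of_mem_bipartiteBelow hle hV hΦk hc (hpair ▸ mem_insert_of_mem
      (mem_singleton_self h)) hbmem hh hb₂
    have hab : a ≠ h := by rintro rfl; simp [ha] at hh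
    have hra : r a c := ((mem_bipartiteBelow r).1 (hpair ▸ mem_insert_self a {h})).2
    exact ⟨a, hpair, ha, hadj a h c hab hra hbc⟩
  obtain ⟨a, hpair, ha, hab⟩ := hleaf hS.1 hS.2
  obtain ⟨a', hpair', ha', hab'⟩ := hleaf hS'.1 hS'.2
  refine ⟨a, a', fun h => hSS' ?_, hab, hab'.symm, ?_⟩
  · rw [h, ha'] at ha
    exact singleton_injective ha.symm
  · rw [coveredWith, hbS, biUnion_insert, singleton_biUnion, hpair, hpair']
    ext x
    simp only [mem_union, mem_insert, mem_singleton]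
    tauto

theorem IsDiscriminatingCode.eq_of_mem_coveredWith (hΦ : IsDiscriminatingCode r V Φ)
    (hle : ∀ c ∈ Φ, #(V.bipartiteBelow r c) ≤ 2) (hV : #V = 3 * k) (hΦk : #Φ = 2 * k)
    {b b' x : α} (hb : b ∈ V) (hb' : b' ∈ V) (hb₂ : #(Φ.bipartiteAbove r b) = 2)
    (hb₂' : #(Φ.bipartiteAbove r b') = 2) (hx : x ∈ coveredWith r V Φ b)
    (hx' : x ∈ coveredWith r V Φ b') : b = b' := by
  obtain ⟨c, hc, hbc, hxV, hxc⟩ := mem_coveredWith.1 hx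
  obtain ⟨c', hc', hbc', -, hxc'⟩ := mem_coveredWith.1 hx'
  have hmem : ∀ {y c}, y ∈ V → r y c → y ∈ V.bipartiteBelow r c :=
    fun hy hyc => (mem_bipartiteBelow r).2 ⟨hy, hyc⟩
  rcases (hΦ.tight_of_card_eq hle hV hΦk).2.2.1 x hxV with hx₁ | hx₂
  · obtain rfl : c = c' := card_le_one.1 hx₁.le c ((mem_bipartiteAbove r).2 ⟨hc, hxc⟩) c'
      ((mem_bipartiteAbove r).2 ⟨hc', hxc'⟩)
    exact hΦ.eq_of_mem_bipartiteBelow hle hV hΦk hc (hmem hb hbc) (hmem hb' hbc') hb₂ hb₂'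
  · have h₁ := hΦ.eq_of_mem_bipartiteBelow hle hV hΦk hc (hmem hxV hxc) (hmem hb hbc) hx₂ hb₂
    have h₂ := hΦ.eq_of_mem_bipartiteBelow hle hV hΦk hc' (hmem hxV hxc') (hmem hb' hbc') hx₂ hb₂'
    exact h₁.symm.trans h₂

theorem IsDiscriminatingCode.exists_isP3Partition {G : SimpleGraph α}
    (hΦ : IsDiscriminatingCode r V Φ)
    (hle : ∀ c ∈ Φ, #(V.bipartiteBelow r c) ≤ 2) (hV : #V = 3 * k) (hΦk : #Φ = 2 * k)
    (hadj : ∀ a b c, a ≠ b → r a c → r b c → G.Adj a b) :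
    ∃ Pt, IsP3Partition G V k Pt := by
  set N := {v ∈ V | #(Φ.bipartiteAbove r v) = 2}
  have hhub : ∀ b ∈ N, ∀ b' ∈ N, ∀ x ∈ coveredWith r V Φ b, x ∈ coveredWith r V Φ b' → b = b' :=
    fun b hb b' hb' _ => hΦ.eq_of_mem_coveredWith hle hV hΦk (mem_filter.1 hb).1
      (mem_filter.1 hb').1 (mem_filter.1 hb).2 (mem_filter.1 hb').2
  refine ⟨N.image (coveredWith r V Φ), ?_, ?_, ?_, ?_, ?_⟩
  · refine (card_image_of_injOn fun b hb b' hb' h => ?_).trans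
      (hΦ.tight_of_card_eq hle hV hΦk).2.2.2
    have hself := hΦ.mem_coveredWith_self (mem_filter.1 hb').1
    exact hhub b hb b' hb' b' (h ▸ hself) hself
  · simp only [mem_image]
    rintro _ ⟨b, -, rfl⟩
    exact coveredWith_subset
  · intro t ht t' ht' hne
    obtain ⟨b, hb, rfl⟩ := mem_image.1 ht
    obtain ⟨b', hb', rfl⟩ := mem_image.1 ht'
    exact disjoint_left.2 fun x hx hx' => hne (congrArg _ (hhub b hb b' hb' x hx hx'))
  · refine (biUnion_subset.2 fun t ht => ?_).antisymm' fun v hv => ?_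
    · obtain ⟨b, -, rfl⟩ := mem_image.1 ht
      exact coveredWith_subset
    · obtain ⟨c, hc, hvc⟩ := hΦ.1 v hv
      obtain ⟨a, h, hpair, -, hh⟩ := hΦ.exists_bipartiteBelow_eq_pair hle hV hΦk hc
      have hhc := (mem_bipartiteBelow r).1 (hpair ▸ mem_insert_of_mem (mem_singleton_self h))
      refine mem_biUnion.2 ⟨_, mem_image_of_mem _ (mem_filter.2 ⟨hhc.1, hh⟩), ?_⟩
      exact mem_coveredWith.2 ⟨c, hc, hhc.2, hv, hvc⟩
  · simp only [mem_image]
    rintro _ ⟨b, hb, rfl⟩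
    obtain ⟨a, a', haa', hab, hba', heq⟩ :=
      hΦ.coveredWith_eq_path hle hV hΦk hadj (mem_filter.1 hb).1 (mem_filter.1 hb).2
    exact ⟨a, b, a', haa', hab, hba', heq⟩

end DiscriminatingCode

lemma card_bipartiteBelow_inSq_le_two [∀ v c, Decidable (inSq (Tmap v) c)]
    (V : Finset (ℤ × ℤ)) (c : ℝ × ℝ) :
    #(V.bipartiteBelow (fun v c => inSq (Tmap v) c) c) ≤ 2 := by
  refine SimpleGraph.IsClique.card_le_of_colorable (G := gridGraph) ?_ gridGraph_colorable_two
  intro u hu v hv huv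
  exact gridAdj_of_inSq ((mem_bipartiteBelow _).1 hu).2 ((mem_bipartiteBelow _).1 hv).2 huv

lemma isDiscriminatingCode_inSq_iff [∀ v c, Decidable (inSq (Tmap v) c)]
    {V : Finset (ℤ × ℤ)} {Φ : Finset (ℝ × ℝ)} :
    IsDiscriminatingCode (fun v c => inSq (Tmap v) c) V Φ ↔
      (∀ v ∈ V, ∃ c ∈ Φ, inSq (Tmap v) c) ∧
        ∀ u ∈ V, ∀ v ∈ V, Tmap u ≠ Tmap v → sqCode Φ (Tmap u) ≠ sqCode Φ (Tmap v) := by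
  have hcode : ∀ v, sqCode Φ (Tmap v) = Φ.bipartiteAbove (fun v c => inSq (Tmap v) c) v := by
    intro v
    ext c
    simp [sqCode]
  simp only [IsDiscriminatingCode, Set.InjOn, mem_coe, hcode, Finset.coe_inj,
    Tmap_injective.ne_iff, ne_eq, not_imp_not]

theorem stmt16 (V : Finset (ℤ × ℤ)) (k : ℕ) (hV : V.card = 3 * k) :
    (∃ Pt : Finset (Finset (ℤ × ℤ)),
      Pt.card = k ∧
      (∀ t ∈ Pt, t ⊆ V) ∧
      (∀ t₁ ∈ Pt, ∀ t₂ ∈ Pt, t₁ ≠ t₂ → Disjoint t₁ t₂) ∧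
      V = Pt.biUnion id ∧
      (∀ t ∈ Pt, ∃ a b c : ℤ × ℤ,
        a ≠ c ∧ gridAdj a b ∧ gridAdj b c ∧ t = {a, b, c})) ↔
    (∃ Φ : Finset (ℝ × ℝ),
      Φ.card = 2 * k ∧
      (∀ v ∈ V, ∃ c ∈ Φ, inSq (Tmap v) c) ∧
      (∀ u ∈ V, ∀ v ∈ V, Tmap u ≠ Tmap v →
        sqCode Φ (Tmap u) ≠ sqCode Φ (Tmap v))) := by
  classical
  constructor
  · rintro ⟨Pt, hPt⟩
    obtain ⟨Φ, hΦk, hΦ⟩ := IsP3Partition.exists_isDiscriminatingCode (G := gridGraph) hPt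
      fun a b hab => inSq_midpoint_iff hab
    exact ⟨Φ, hΦk, isDiscriminatingCode_inSq_iff.1 hΦ⟩
  · rintro ⟨Φ, hΦk, hΦ⟩
    exact (isDiscriminatingCode_inSq_iff.2 hΦ).exists_isP3Partition (G := gridGraph)
      (fun c _ => card_bipartiteBelow_inSq_le_two V c) hV hΦk
      fun a b c hab ha hb => gridAdj_of_inSq ha hb hab
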